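/- Define F : ℝⁿ → ℝ^{n+1} by F(x) = (sort(x), Q(x)). Then for all x, y ∈ ℝⁿ: d_+(x,y) ≤ ‖F(x) − F(y)‖₁ ≤ 2·d_+(x,y), where d_+(x,y) = min_{σ∈A_n} ‖x − σy‖₁. -/

import Mathlib

/-!
Write `Q = E · M`, where `E x = ∏_{i<j} sign (x_j - x_i)` changes by `sign σ` when the
coordinates are permuted by `σ`, and `M x = min_{i<j} |x_j - x_i|` is permutation invariant;
moreover `|Q x| = M x`, and `Q` is `1`-Lipschitz for the `ℓ¹` norm.

Upper bound: if the even `σ` realises `d_+(x, y)`, the rearrangement inequality bounds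
`‖sort x - sort y‖₁` by `‖x - σ y‖₁`, and so does `|Q x - Q y| = |Q x - Q (σ y)|`.

Lower bound: the matching `π = sort_y ∘ sort_x⁻¹` costs exactly `‖sort x - sort y‖₁`. If `π` is
odd, then `Q x · Q y ≤ 0` since `Q (sort x) ≥ 0`, so `|Q x - Q y| = M x + M y`; composing `π`
with the transposition of a closest pair of `x` (resp. `y`) gives an even matching that costs
at most `2 M x` (resp. `2 M y`) more.
-/

/-- The nondecreasing rearrangement (sorting) of a vector. -/
noncomputable def sortVec {n : ℕ} (x : Fin n → ℝ) : Fin n → ℝ := x ∘ Tuple.sort x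

/-- Q(x) = (∏_{i<j} sign(x_j - x_i)) · min_{i<j} |x_j - x_i|. -/
noncomputable def Qfun {n : ℕ} (x : Fin n → ℝ) : ℝ :=
  (∏ i : Fin n, ∏ j ∈ Finset.Ioi i, Real.sign (x j - x i)) *
  sInf {d : ℝ | ∃ i j : Fin n, i < j ∧ d = |x j - x i|}

/-- Minimal adjacent gap min_{j} (x_{j+1} - x_j). -/
noncomputable def minGap {n : ℕ} (x : Fin n → ℝ) : ℝ :=
  sInf {d : ℝ | ∃ i j : Fin n, (i : ℕ) + 1 = (j : ℕ) ∧ d = x j - x i}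

/-- d_±(x,y) = min_{σ ∈ S_n} ‖x - σy‖₁ where (σy)_i = y_{σ(i)}. -/
noncomputable def dpm {n : ℕ} (x y : Fin n → ℝ) : ℝ :=
  Finset.univ.inf' Finset.univ_nonempty fun σ : Equiv.Perm (Fin n) => ∑ i, |x i - y (σ i)|

/-- d_+(x,y) = min_{σ ∈ A_n} ‖x - σy‖₁. -/
noncomputable def dplus {n : ℕ} (x y : Fin n → ℝ) : ℝ :=
  Finset.univ.inf' Finset.univ_nonempty fun σ : alternatingGroup (Fin n) =>
    ∑ i, |x i - y ((σ : Equiv.Perm (Fin n)) i)|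

open Finset Equiv Equiv.Perm

lemma abs_sub_add_abs_sub_le_of_le {a b c d : ℝ} (hab : a ≤ b) (hcd : c ≤ d) :
    |a - c| + |b - d| ≤ |a - d| + |b - c| := by
  rcases abs_cases (a - c) with h₁ | h₁ <;> rcases abs_cases (b - d) with h₂ | h₂ <;>
    rcases abs_cases (a - d) with h₃ | h₃ <;> rcases abs_cases (b - c) with h₄ | h₄ <;>
    linarith

lemma abs_sub_eq_abs_add_abs_of_mul_nonpos {a b : ℝ} (h : a * b ≤ 0) :
    |a - b| = |a| + |b| := by
  rcases abs_cases a with ⟨ha, ha'⟩ | ⟨ha, ha'⟩ <;>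
    rcases abs_cases b with ⟨hb, hb'⟩ | ⟨hb, hb'⟩ <;>
    rcases abs_cases (a - b) with ⟨hab, hab'⟩ | ⟨hab, hab'⟩ <;> nlinarith

lemma Real.sign_nonneg {r : ℝ} (hr : 0 ≤ r) : 0 ≤ Real.sign r := by
  rcases hr.eq_or_lt with rfl | hr
  · simp [Real.sign_zero]
  · simp [Real.sign_of_pos hr]

lemma Real.abs_sign_of_ne_zero {r : ℝ} (hr : r ≠ 0) : |Real.sign r| = 1 := by
  rcases Real.sign_apply_eq_of_ne_zero r hr with h | h <;> simp [h]

lemma Real.sign_eq_sign_of_mul_pos {a b : ℝ} (h : 0 < a * b) : Real.sign a = Real.sign b := by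
  rcases pos_and_pos_or_neg_and_neg_of_mul_pos h with ⟨ha, hb⟩ | ⟨ha, hb⟩
  · rw [Real.sign_of_pos ha, Real.sign_of_pos hb]
  · rw [Real.sign_of_neg ha, Real.sign_of_neg hb]

section MatchCost

variable {ι : Type*} [Fintype ι]

def matchCost (x y : ι → ℝ) (σ : Perm ι) : ℝ := ∑ i, |x i - y (σ i)|

variable (x y : ι → ℝ)

lemma matchCost_inv (σ : Perm ι) : matchCost y x σ⁻¹ = matchCost x y σ := by
  unfold matchCost
  rw [← Equiv.sum_comp σ]
  simp [abs_sub_comm]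

lemma matchCost_mul_swap [DecidableEq ι] (σ : Perm ι) {i j : ι} (hij : i ≠ j) :
    matchCost x y (σ * swap i j) + (|x i - y (σ i)| + |x j - y (σ j)|) =
      matchCost x y σ + (|x i - y (σ j)| + |x j - y (σ i)|) := by
  have h := Fintype.sum_eq_add (f := fun k => |x k - y ((σ * swap i j) k)| - |x k - y (σ k)|)
    i j hij fun k hk => by simp [swap_apply_of_ne_of_ne hk.1 hk.2]
  simp only [Finset.sum_sub_distrib, Perm.mul_apply, swap_apply_left, swap_apply_right] at h
  simp only [matchCost, Perm.mul_apply]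
  linarith

lemma matchCost_mul_swap_le [DecidableEq ι] (σ : Perm ι) (i j : ι) :
    matchCost x y (σ * swap i j) ≤ matchCost x y σ + 2 * |x i - x j| := by
  rcases eq_or_ne i j with rfl | hij
  · simp [swap_self, ← Perm.one_def]
  have hswap := matchCost_mul_swap x y σ hij
  have hi := abs_sub_le (x i) (x j) (y (σ j))
  have hj := abs_sub_le (x j) (x i) (y (σ i))
  rw [abs_sub_comm (x j) (x i)] at hj
  linarith

lemma matchCost_swap_mul_le [DecidableEq ι] (σ : Perm ι) (i j : ι) :
    matchCost x y (swap i j * σ) ≤ matchCost x y σ + 2 * |y i - y j| := by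
  rw [← matchCost_inv, ← matchCost_inv x y σ, mul_inv_rev, swap_inv]
  exact matchCost_mul_swap_le y x σ⁻¹ i j

variable [LinearOrder ι] {x y}

lemma matchCost_one_le (hx : Monotone x) (hy : Monotone y) (σ : Perm ι) :
    matchCost x y 1 ≤ matchCost x y σ := by
  classical
  induction hc : #σ.support using Nat.strong_induction_on generalizing σ with
  | _ k ih =>
  rcases σ.support.eq_empty_or_nonempty with h | hne
  · rw [support_eq_empty_iff.mp h]
  -- Sending the smallest moved point `i` back to itself shrinks the support and, by the
  -- four-point inequality, does not increase the cost.
  set i := σ.support.min' hne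
  have hi : σ i ≠ i := mem_support.mp (min'_mem _ _)
  set j := σ⁻¹ i
  have hσj : σ j = i := by simp [j]
  have hij : i ≠ j := fun h => hi (by simpa [← h] using hσj)
  have hi_le_j : i ≤ j := min'_le _ _ (mem_support.mpr (by rw [hσj]; exact hij))
  have hi_le_σi : i ≤ σ i := min'_le _ _ (apply_mem_support.mpr (min'_mem _ _))
  have hcard : #(σ * swap i j).support < k := by
    rw [mul_swap_eq_swap_mul, hσj, swap_comm, ← hc]
    exact card_support_swap_mul hi
  have hswap := matchCost_mul_swap x y σ hij
  have hfour := abs_sub_add_abs_sub_le_of_le (hx hi_le_j) (hy hi_le_σi)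
  rw [hσj] at hswap
  linarith [ih _ hcard _ rfl]

end MatchCost

section PairInvariants

variable {n : ℕ}

noncomputable def pairSignProd (x : Fin n → ℝ) : ℝ :=
  ∏ i : Fin n, ∏ j ∈ Ioi i, Real.sign (x j - x i)

def pairDists (x : Fin n → ℝ) : Set ℝ := {d : ℝ | ∃ i j : Fin n, i < j ∧ d = |x j - x i|}

noncomputable def minPairDist (x : Fin n → ℝ) : ℝ := sInf (pairDists x)

lemma Qfun_eq_pairSignProd_mul (x : Fin n → ℝ) : Qfun x = pairSignProd x * minPairDist x := rfl

lemma pairSignProd_comp_perm (x : Fin n → ℝ) (σ : Perm (Fin n)) :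
    pairSignProd (x ∘ σ) = sign σ * pairSignProd x :=
  σ.prod_Ioi_comp_eq_sign_mul_prod (f := fun i j => Real.sign (x j - x i))
    fun _ _ => by rw [← Real.sign_neg, neg_sub]

lemma pairSignProd_nonneg_of_monotone {x : Fin n → ℝ} (hx : Monotone x) : 0 ≤ pairSignProd x :=
  prod_nonneg fun _ _ => prod_nonneg fun _ hj =>
    Real.sign_nonneg (sub_nonneg.mpr (hx (mem_Ioi.mp hj).le))

lemma abs_pairSignProd_of_injective {x : Fin n → ℝ} (hx : Function.Injective x) :
    |pairSignProd x| = 1 := by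
  simp only [pairSignProd, abs_prod]
  exact prod_eq_one fun i _ => prod_eq_one fun j hj =>
    Real.abs_sign_of_ne_zero (sub_ne_zero.mpr (hx.ne (mem_Ioi.mp hj).ne'))

lemma pairDists_nonempty (hn : 2 ≤ n) (x : Fin n → ℝ) : (pairDists x).Nonempty :=
  ⟨_, ⟨0, by omega⟩, ⟨1, by omega⟩, Fin.lt_def.mpr (by simp), rfl⟩

lemma pairDists_finite (x : Fin n → ℝ) : (pairDists x).Finite :=
  (Set.finite_range fun p : Fin n × Fin n => |x p.2 - x p.1|).subset
    fun _ ⟨i, j, _, hd⟩ => ⟨(i, j), hd.symm⟩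

lemma minPairDist_nonneg (x : Fin n → ℝ) : 0 ≤ minPairDist x :=
  Real.sInf_nonneg fun _ ⟨_, _, _, hd⟩ => hd ▸ abs_nonneg _

lemma minPairDist_le (x : Fin n → ℝ) {i j : Fin n} (hij : i ≠ j) : minPairDist x ≤ |x j - x i| := by
  rcases hij.lt_or_gt with h | h
  · exact csInf_le (pairDists_finite x).bddBelow ⟨i, j, h, rfl⟩
  · exact csInf_le (pairDists_finite x).bddBelow ⟨j, i, h, abs_sub_comm _ _⟩

lemma le_minPairDist (hn : 2 ≤ n) (x : Fin n → ℝ) {a : ℝ}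
    (h : ∀ i j : Fin n, i < j → a ≤ |x j - x i|) : a ≤ minPairDist x :=
  le_csInf (pairDists_nonempty hn x) fun _ ⟨i, j, hij, hd⟩ => hd ▸ h i j hij

lemma exists_minPairDist_eq (hn : 2 ≤ n) (x : Fin n → ℝ) :
    ∃ i j : Fin n, i ≠ j ∧ minPairDist x = |x j - x i| := by
  obtain ⟨i, j, hij, hd⟩ := (pairDists_nonempty hn x).csInf_mem (pairDists_finite x)
  exact ⟨i, j, hij.ne, hd⟩

lemma minPairDist_comp_perm (hn : 2 ≤ n) (x : Fin n → ℝ) (σ : Perm (Fin n)) :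
    minPairDist (x ∘ σ) = minPairDist x := by
  refine le_antisymm (le_minPairDist hn x fun i j hij => ?_)
    (le_minPairDist hn _ fun i j hij => minPairDist_le x (σ.injective.ne hij.ne))
  simpa using minPairDist_le (x ∘ σ) (σ.symm.injective.ne hij.ne)

lemma minPairDist_eq_zero_of_eq (x : Fin n → ℝ) {i j : Fin n} (hij : i ≠ j) (h : x i = x j) :
    minPairDist x = 0 :=
  le_antisymm (by simpa [h] using minPairDist_le x hij) (minPairDist_nonneg x)

end PairInvariants

section Qfun

variable {n : ℕ}

lemma abs_Qfun (x : Fin n → ℝ) : |Qfun x| = minPairDist x := by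
  rw [Qfun_eq_pairSignProd_mul, abs_mul, abs_of_nonneg (minPairDist_nonneg x)]
  by_cases hx : Function.Injective x
  · rw [abs_pairSignProd_of_injective hx, one_mul]
  · obtain ⟨i, j, h, hij⟩ := Function.not_injective_iff.mp hx
    rw [minPairDist_eq_zero_of_eq x hij h, mul_zero]

lemma Qfun_comp_perm (hn : 2 ≤ n) (x : Fin n → ℝ) (σ : Perm (Fin n)) :
    Qfun (x ∘ σ) = sign σ * Qfun x := by
  rw [Qfun_eq_pairSignProd_mul, Qfun_eq_pairSignProd_mul, pairSignProd_comp_perm,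
    minPairDist_comp_perm hn, mul_assoc]

lemma Qfun_eq_sign_sort_mul (hn : 2 ≤ n) (x : Fin n → ℝ) :
    Qfun x = sign (Tuple.sort x) * Qfun (sortVec x) := by
  rw [sortVec, Qfun_comp_perm hn, ← mul_assoc, ← Int.cast_mul, ← Units.val_mul,
    Int.units_mul_self, Units.val_one, Int.cast_one, one_mul]

lemma Qfun_sortVec_nonneg (x : Fin n → ℝ) : 0 ≤ Qfun (sortVec x) :=
  mul_nonneg (pairSignProd_nonneg_of_monotone (Tuple.monotone_sort x)) (minPairDist_nonneg _)

lemma Qfun_mul_Qfun_nonpos (hn : 2 ≤ n) {x y : Fin n → ℝ}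
    (h : sign (Tuple.sort y * (Tuple.sort x)⁻¹) = -1) : Qfun x * Qfun y ≤ 0 := by
  have hsign : (sign (Tuple.sort x) : ℝ) * sign (Tuple.sort y) = -1 := by
    rw [Perm.sign_mul, sign_inv, mul_comm] at h
    rw [← Int.cast_mul, ← Units.val_mul, h]
    simp
  rw [Qfun_eq_sign_sort_mul hn x, Qfun_eq_sign_sort_mul hn y]
  nlinarith [mul_nonneg (Qfun_sortVec_nonneg x) (Qfun_sortVec_nonneg y)]

lemma abs_sub_sub_sub_le_sum_abs_sub (x y : Fin n → ℝ) {i j : Fin n} (hij : i ≠ j) :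
    |(x j - x i) - (y j - y i)| ≤ ∑ k, |x k - y k| :=
  calc |(x j - x i) - (y j - y i)| = |(x j - y j) - (x i - y i)| := by ring_nf
    _ ≤ |x j - y j| + |x i - y i| := abs_sub _ _
    _ = ∑ k ∈ {j, i}, |x k - y k| := (sum_pair (f := fun k => |x k - y k|) hij.symm).symm
    _ ≤ ∑ k, |x k - y k| := sum_le_univ_sum_of_nonneg fun _ => abs_nonneg _

lemma minPairDist_le_add_sum_abs_sub (hn : 2 ≤ n) (x y : Fin n → ℝ) :
    minPairDist x ≤ minPairDist y + ∑ k, |x k - y k| := by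
  have h := le_minPairDist hn y (a := minPairDist x - ∑ k, |x k - y k|) fun i j hij => by
    have hM := minPairDist_le x hij.ne
    have hdiff := abs_sub_sub_sub_le_sum_abs_sub x y hij.ne
    have htri := abs_sub_abs_le_abs_sub (x j - x i) (y j - y i)
    linarith
  linarith

lemma abs_minPairDist_sub_le (hn : 2 ≤ n) (x y : Fin n → ℝ) :
    |minPairDist x - minPairDist y| ≤ ∑ k, |x k - y k| := by
  have hyx := minPairDist_le_add_sum_abs_sub hn y x
  simp only [abs_sub_comm (y _)] at hyx
  exact abs_sub_le_iff.mpr ⟨by linarith [minPairDist_le_add_sum_abs_sub hn x y], by linarith⟩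

lemma abs_Qfun_sub_le (hn : 2 ≤ n) (x y : Fin n → ℝ) :
    |Qfun x - Qfun y| ≤ ∑ k, |x k - y k| := by
  by_cases h : ∃ i j : Fin n, i < j ∧ (x j - x i) * (y j - y i) ≤ 0
  · obtain ⟨i, j, hij, hxy⟩ := h
    calc |Qfun x - Qfun y| ≤ |Qfun x| + |Qfun y| := abs_sub _ _
      _ = minPairDist x + minPairDist y := by rw [abs_Qfun, abs_Qfun]
      _ ≤ |x j - x i| + |y j - y i| :=
          add_le_add (minPairDist_le x hij.ne) (minPairDist_le y hij.ne)
      _ = |(x j - x i) - (y j - y i)| := (abs_sub_eq_abs_add_abs_of_mul_nonpos hxy).symm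
      _ ≤ ∑ k, |x k - y k| := abs_sub_sub_sub_le_sum_abs_sub x y hij.ne
  push Not at h
  have hx : Function.Injective x := fun a b hab => by
    by_contra hne
    rcases Ne.lt_or_gt hne with h' | h' <;> simpa [hab] using h _ _ h'
  have hE : pairSignProd x = pairSignProd y := prod_congr rfl fun i _ =>
    prod_congr rfl fun j hj => Real.sign_eq_sign_of_mul_pos (h i j (mem_Ioi.mp hj))
  rw [Qfun_eq_pairSignProd_mul, Qfun_eq_pairSignProd_mul, ← hE, ← mul_sub, abs_mul,
    abs_pairSignProd_of_injective hx, one_mul]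
  exact abs_minPairDist_sub_le hn x y

end Qfun

section Dplus

variable {n : ℕ} (x y : Fin n → ℝ)

lemma dplus_le_matchCost {σ : Perm (Fin n)} (hσ : sign σ = 1) : dplus x y ≤ matchCost x y σ :=
  inf'_le _ (mem_univ (⟨σ, mem_alternatingGroup.mpr hσ⟩ : alternatingGroup (Fin n)))

lemma exists_dplus_eq_matchCost : ∃ σ : Perm (Fin n), sign σ = 1 ∧ dplus x y = matchCost x y σ :=
  let ⟨σ, _, hσ⟩ := exists_mem_eq_inf' univ_nonempty
    (fun σ : alternatingGroup (Fin n) => matchCost x y σ)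
  ⟨σ, mem_alternatingGroup.mp σ.2, hσ⟩

lemma matchCost_sort_mul_inv_sort :
    matchCost x y (Tuple.sort y * (Tuple.sort x)⁻¹) = ∑ i, |sortVec x i - sortVec y i| := by
  rw [matchCost, ← Equiv.sum_comp (Tuple.sort x)]
  simp [sortVec]

lemma sum_abs_sortVec_sub_le_matchCost (σ : Perm (Fin n)) :
    ∑ i, |sortVec x i - sortVec y i| ≤ matchCost x y σ :=
  calc ∑ i, |sortVec x i - sortVec y i| = matchCost (sortVec x) (sortVec y) 1 := rfl
    _ ≤ matchCost (sortVec x) (sortVec y) ((Tuple.sort y)⁻¹ * σ * Tuple.sort x) :=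
        matchCost_one_le (Tuple.monotone_sort x) (Tuple.monotone_sort y) _
    _ = matchCost x y σ := by
        simp only [matchCost, sortVec, Function.comp_apply, Perm.mul_apply, Perm.coe_inv,
          apply_symm_apply]
        exact Equiv.sum_comp (Tuple.sort x) fun i => |x i - y (σ i)|

theorem dplus_le_sum_abs_sortVec_sub_add (hn : 2 ≤ n) :
    dplus x y ≤ (∑ i, |sortVec x i - sortVec y i|) + |Qfun x - Qfun y| := by
  set π := Tuple.sort y * (Tuple.sort x)⁻¹
  rw [← matchCost_sort_mul_inv_sort]
  rcases Int.units_eq_one_or (sign π) with hπ | hπ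
  · linarith [dplus_le_matchCost x y hπ, abs_nonneg (Qfun x - Qfun y)]
  have heven : ∀ {i j : Fin n}, i ≠ j → sign (π * swap i j) = 1 ∧ sign (swap i j * π) = 1 :=
    fun hij => by simp [Perm.sign_mul, sign_swap hij, hπ]
  obtain ⟨i, j, hij, hx⟩ := exists_minPairDist_eq hn x
  obtain ⟨k, l, hkl, hy⟩ := exists_minPairDist_eq hn y
  have hi := (dplus_le_matchCost x y (heven hij).1).trans (matchCost_mul_swap_le x y π i j)
  have hk := (dplus_le_matchCost x y (heven hkl).2).trans (matchCost_swap_mul_le x y π k l)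
  have hQ : |Qfun x - Qfun y| = minPairDist x + minPairDist y := by
    rw [abs_sub_eq_abs_add_abs_of_mul_nonpos (Qfun_mul_Qfun_nonpos hn hπ), abs_Qfun, abs_Qfun]
  rw [abs_sub_comm] at hx hy
  linarith

theorem sum_abs_sortVec_sub_add_le (hn : 2 ≤ n) :
    (∑ i, |sortVec x i - sortVec y i|) + |Qfun x - Qfun y| ≤ 2 * dplus x y := by
  obtain ⟨σ, hσ, hd⟩ := exists_dplus_eq_matchCost x y
  have hQ : |Qfun x - Qfun y| ≤ matchCost x y σ := by
    have hQy : Qfun (y ∘ σ) = Qfun y := by simp [Qfun_comp_perm hn, hσ]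
    rw [← hQy]
    exact abs_Qfun_sub_le hn x (y ∘ σ)
  linarith [sum_abs_sortVec_sub_le_matchCost x y σ]

end Dplus

theorem stmt12 (n : ℕ) (hn : 2 ≤ n) (x y : Fin n → ℝ) :
    dplus x y ≤ (∑ i, |sortVec x i - sortVec y i|) + |Qfun x - Qfun y| ∧
    (∑ i, |sortVec x i - sortVec y i|) + |Qfun x - Qfun y| ≤ 2 * dplus x y :=
  ⟨dplus_le_sum_abs_sortVec_sub_add x y hn, sum_abs_sortVec_sub_add_le x y hn⟩
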